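/- arXiv:1511.05987 — 2 statements merged into one kernel-verified Lean document; each statement's English description precedes it below -/
import Mathlib

section
/- Let X be a finite multiset of positive integers with total sum E. There exists a partition of X into X₁, X₂ with Σ_{x∈X₁} x = Σ_{x∈X₂} x if and only if there exist nonnegative reals α, β with α + β = E, α and β each expressible as a sum of a subset of X (the two subsets partitioning X), such that (2/3)α ≥ E/3 and α/3 + (2/3)β ≥ E/2. -/
/-! Writing α and β for the sums of the two parts, so that E = α + β, the first condition
says α ≥ β and the second says β ≥ α; together they say the partition is balanced. -/

theorem delivery_conditions_iff_eq {α β : ℝ} :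
    (2 / 3 : ℝ) * α ≥ (α + β) / 3 ∧ α / 3 + (2 / 3 : ℝ) * β ≥ (α + β) / 2 ↔ α = β := by
  constructor
  · rintro ⟨hαβ, hβα⟩
    linarith
  · rintro rfl
    constructor <;> linarith

theorem partition_iff_delivery_conditions_general (X : Multiset ℕ)
    (E : ℕ) (hE : E = X.sum) :
    (∃ X₁ X₂ : Multiset ℕ, X₁ + X₂ = X ∧ X₁.sum = X₂.sum) ↔
      (∃ X₁ X₂ : Multiset ℕ, X₁ + X₂ = X ∧
        (2 / 3 : ℝ) * (X₁.sum : ℝ) ≥ (E : ℝ) / 3 ∧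
        (X₁.sum : ℝ) / 3 + (2 / 3 : ℝ) * (X₂.sum : ℝ) ≥ (E : ℝ) / 2) := by
  subst hE
  refine exists₂_congr fun X₁ X₂ => and_congr_right fun hX => ?_
  rw [← hX, Multiset.sum_add, Nat.cast_add, delivery_conditions_iff_eq, Nat.cast_inj]

/-- the directed-graph delivery instance is solvable iff Integer
Set Partition on the multiset X is solvable. -/
theorem partition_iff_delivery_conditions (X : Multiset ℕ)
    (hpos : ∀ x ∈ X, 0 < x) (E : ℕ) (hE : E = X.sum) :
    (∃ X₁ X₂ : Multiset ℕ, X₁ + X₂ = X ∧ X₁.sum = X₂.sum) ↔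
      (∃ X₁ X₂ : Multiset ℕ, X₁ + X₂ = X ∧
        (2 / 3 : ℝ) * (X₁.sum : ℝ) ≥ (E : ℝ) / 3 ∧
        (X₁.sum : ℝ) / 3 + (2 / 3 : ℝ) * (X₂.sum : ℝ) ≥ (E : ℝ) / 2) :=
  partition_iff_delivery_conditions_general X E hE
end

section
/- Consider the recurrence from algorithm Delivery2-on-the-Line: initialize e := 0, s := a_1; at step i, if a_i > e(i) + e + s then set e := e + e(i) and DC(i) := s + e − a_i; otherwise set s := s + (e + e(i) + max(a_i − s, 0))/2, then e := 0 and DC(i) := 2(s − a_i). Prove the invariant: after every step, either (e = 0 and DC(i) = 2(s − a_i) ≥ 0 in the case a_i ≤ s) or (DC(i) = s + e − a_i < 0 and e equals the sum of energies accumulated since the last reset). -/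
/-- One step of algorithm Delivery2-on-the-Line: from state (s, acc) process the
agent at position `ai` with energy `ei`. -/
noncomputable def d2step (ai ei : ℝ) : ℝ × ℝ → ℝ × ℝ := fun p =>
  if ai > ei + p.2 + p.1 then (p.1, p.2 + ei)
  else (p.1 + (p.2 + ei + max (ai - p.1) 0) / 2, 0)

/-- The state (s, acc) after processing agents 0, 1, …, i (0-indexed), starting
from the initial state (a 0, 0). -/
noncomputable def d2run (a e : ℕ → ℝ) : ℕ → ℝ × ℝ
  | 0 => (a 0, 0)
  | i + 1 => d2step (a (i + 1)) (e (i + 1)) (d2run a e i)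

/-- The value DC(i) computed at step i. -/
noncomputable def d2DC (a e : ℕ → ℝ) (i : ℕ) : ℝ :=
  if a (i + 1) > e (i + 1) + (d2run a e i).2 + (d2run a e i).1 then
    (d2run a e (i + 1)).1 + (d2run a e (i + 1)).2 - a (i + 1)
  else 2 * ((d2run a e (i + 1)).1 - a (i + 1))

section

variable {ai ei : ℝ} {p : ℝ × ℝ}

lemma d2step_of_gt (h : ai > ei + p.2 + p.1) : d2step ai ei p = (p.1, p.2 + ei) :=
  if_pos h

lemma d2step_of_not_gt (h : ¬ ai > ei + p.2 + p.1) :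
    d2step ai ei p = (p.1 + (p.2 + ei + max (ai - p.1) 0) / 2, 0) :=
  if_neg h

/-- The hypothesis says `p.2 + ei ≥ ai - p.1`, so the new `s` exceeds `ai` by at least
`((p.1 - ai) + max (ai - p.1) 0) / 2 ≥ 0`. -/
lemma le_d2step_fst_of_not_gt (h : ¬ ai > ei + p.2 + p.1) : ai ≤ (d2step ai ei p).1 := by
  rw [d2step_of_not_gt h]
  push Not at h
  have := le_max_left (ai - p.1) 0
  linarith

end

theorem d2_invariant_general (a e : ℕ → ℝ) (i : ℕ) :
    (¬ a (i + 1) > e (i + 1) + (d2run a e i).2 + (d2run a e i).1 →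
      (d2run a e (i + 1)).2 = 0 ∧
      d2DC a e i = 2 * ((d2run a e (i + 1)).1 - a (i + 1)) ∧
      0 ≤ d2DC a e i) ∧
    (a (i + 1) > e (i + 1) + (d2run a e i).2 + (d2run a e i).1 →
      d2DC a e i = (d2run a e (i + 1)).1 + (d2run a e (i + 1)).2 - a (i + 1) ∧
      d2DC a e i < 0 ∧
      (d2run a e (i + 1)).2 = (d2run a e i).2 + e (i + 1)) := by
  have hrun : d2run a e (i + 1) = d2step (a (i + 1)) (e (i + 1)) (d2run a e i) := rfl
  refine ⟨fun h => ?_, fun h => ?_⟩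
  · have hs : a (i + 1) ≤ (d2run a e (i + 1)).1 := le_d2step_fst_of_not_gt h
    rw [d2DC, if_neg h]
    exact ⟨by rw [hrun, d2step_of_not_gt h], rfl, by linarith⟩
  · rw [d2DC, if_pos h, hrun, d2step_of_gt h]
    exact ⟨rfl, by linarith, rfl⟩

/-- shape invariant of Delivery2-on-the-Line: after every step,
either the accumulator was reset to 0 and DC(i) = 2(s' − aᵢ) ≥ 0, or
DC(i) = s' + e' − aᵢ < 0 and e' accumulates the energies since the last reset. -/
theorem d2_invariant (a e : ℕ → ℝ) (ha : StrictMono a) (he : ∀ i, 0 ≤ e i) (i : ℕ) :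
    (¬ a (i + 1) > e (i + 1) + (d2run a e i).2 + (d2run a e i).1 →
      (d2run a e (i + 1)).2 = 0 ∧
      d2DC a e i = 2 * ((d2run a e (i + 1)).1 - a (i + 1)) ∧
      0 ≤ d2DC a e i) ∧
    (a (i + 1) > e (i + 1) + (d2run a e i).2 + (d2run a e i).1 →
      d2DC a e i = (d2run a e (i + 1)).1 + (d2run a e (i + 1)).2 - a (i + 1) ∧
      d2DC a e i < 0 ∧
      (d2run a e (i + 1)).2 = (d2run a e i).2 + e (i + 1)) :=
  d2_invariant_general a e i
end
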